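/- Let $\mathbb{F}_{47}$ be the field with $47$ elements, $f_1 = x^4 + 25x^3 + x^2 + 2x + 31$ and $f_2 = x^3 + x + 38$ in $\mathbb{F}_{47}[x]$. Then $\#\{(x, y_1, y_2) \in \mathbb{F}_{47}^3 : y_1^2 = f_1(x) \text{ and } y_2^2 = f_2(x)\} = 100$. -/

import Mathlib

theorem Nat.card_setOf_and_eq_sum_mul {α β γ : Type*} [Fintype α] [Fintype β] [Fintype γ]
    (P : α → β → Prop) (Q : α → γ → Prop) [∀ x, DecidablePred (P x)]
    [∀ x, DecidablePred (Q x)] :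
    Nat.card {p : α × β × γ | P p.1 p.2.1 ∧ Q p.1 p.2.2} =
      ∑ x, Fintype.card {y // P x y} * Fintype.card {z // Q x z} := by
  let e : {p : α × β × γ | P p.1 p.2.1 ∧ Q p.1 p.2.2} ≃
      Σ x, {y // P x y} × {z // Q x z} :=
    { toFun := fun p => ⟨p.1.1, ⟨p.1.2.1, p.2.1⟩, ⟨p.1.2.2, p.2.2⟩⟩
      invFun := fun q => ⟨⟨q.1, q.2.1.1, q.2.2.1⟩, q.2.1.2, q.2.2.2⟩
      left_inv := fun _ => rfl
      right_inv := fun _ => rfl }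
  simp only [Nat.card_congr e, Nat.card_eq_fintype_card, Fintype.card_sigma, Fintype.card_prod]

/-- Affine point count of the fibre product curve `y₁² = f₁(x)`, `y₂² = f₂(x)`. -/
theorem affine_point_count_11 :
    Nat.card {p : (ZMod 47) × (ZMod 47) × (ZMod 47) |
      p.2.1 ^ 2 = p.1^4 + 25*p.1^3 + p.1^2 + 2*p.1 + 31 ∧
      p.2.2 ^ 2 = p.1^3 + p.1 + 38} = 100 := by
  rw [Nat.card_setOf_and_eq_sum_mul (fun x y => y ^ 2 = x^4 + 25*x^3 + x^2 + 2*x + 31)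
    (fun x z => z ^ 2 = x^3 + x + 38)]
  decide
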